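/- Let d ≥ 1 and let k ≥ 2 be an integer. There exists a constant c > 0 depending only on k such that the following holds. Let g₀ ∈ L¹(ℝ^d) and let g₁ : ℝ^d → ℂ be measurable with ⟨·⟩^{−1}g₁ ∈ L¹(ℝ^d), let M ≥ ‖g₀‖_{L¹} + 2‖⟨·⟩^{−1}g₁‖_{L¹}, with M > 0, and let 0 < T ≤ min(c·M^{−(k−1)/2}, 1). Let v : [0, T] → L¹(ℝ^d) be a continuous map with sup_{t} ‖v(t)‖_{L¹} ≤ 2M satisfying the integral equation v(t)(ξ) = cos(t‖ξ‖)·g₀(ξ) + K(t, ξ)·g₁(ξ) + ∫₀^t K(t − t', ξ)·(v(t')^{*k})(ξ) dt' for all t ∈ [0, T] and a.e. ξ. Define the Picard iterates P₀(t)(ξ) := cos(t‖ξ‖)·g₀(ξ) + K(t, ξ)·g₁(ξ) and P_{m+1}(t)(ξ) := P₀(t)(ξ) + ∫₀^t K(t − t', ξ)·(P_m(t')^{*k})(ξ) dt'. Then sup_{t ∈ [0,T]} ‖P_m(t) − v(t)‖_{L¹} → 0 as m → ∞. -/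

import Mathlib

open MeasureTheory Real Set Classical
open scoped ENNReal

noncomputable section

/-- Euclidean space `ℝ^d`. -/
abbrev Euc (d : ℕ) := EuclideanSpace ℝ (Fin d)

/-- The Japanese bracket `⟨ξ⟩ = (1 + ‖ξ‖²)^{1/2}`. -/
def jb {d : ℕ} (ξ : Euc d) : ℝ := (1 + ‖ξ‖ ^ 2) ^ ((1 : ℝ) / 2)

/-- The wave kernel `K(t,ξ) = sin(t‖ξ‖)/‖ξ‖`, with the convention `K(t,0) = t`. -/
def Kker {d : ℕ} (t : ℝ) (ξ : Euc d) : ℝ :=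
  if ξ = 0 then t else Real.sin (t * ‖ξ‖) / ‖ξ‖

/-- `convPow f n` is the `(n+1)`-fold convolution power of `f`;
in particular `convPow f (k-1) = f^{*k}`. -/
def convPow {d : ℕ} (f : Euc d → ℂ) : ℕ → Euc d → ℂ
  | 0 => f
  | n + 1 => fun ξ => ∫ η, convPow f n η * f (ξ - η)

/-- The weighted norm `‖⟨·⟩^s f‖_{L²(ℝ^d)}` (valued in `ℝ≥0∞`). -/
def wnorm (d : ℕ) (s : ℝ) (f : Euc d → ℂ) : ℝ≥0∞ :=
  eLpNorm (fun ξ => ((jb ξ ^ s : ℝ) : ℂ) * f ξ) 2 volume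

/-!
Picard iteration is a contraction in `C([0,T]; L¹)`. Young's inequality `‖f * g‖₁ ≤ ‖f‖₁ ‖g‖₁`
gives `‖f^{*k} - g^{*k}‖₁ ≤ k B^{k-1} ‖f - g‖₁` for `‖f‖₁, ‖g‖₁ ≤ B`, and `|K(t, ξ)| ≤ t`, so the
Duhamel term of a difference is bounded by `T² k B^{k-1}` times the sup-distance. With `B = 2M`
the choice of `c` makes `T² k (2M)^{k-1} ≤ 1/2`: the iterates stay in the ball of radius `2M`
and their distance to `v` halves at each step.

Since `v` is only a continuous curve in `L¹`, the time integrals are handled through a jointly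
measurable representative of `v` (a pointwise limit of approximants that are piecewise constant
in time); it has the same convolution powers and the same norms.
-/

open Filter Topology Function ContinuousLinearMap
open scoped Convolution

section Convolution

variable {G : Type*} [MeasurableSpace G] [AddGroup G] [MeasurableAdd₂ G] [MeasurableNeg G]
  {μ : Measure G} [SFinite μ] {f f' g g' : G → ℂ}

theorem Measurable.convolution_mul (hf : Measurable f) (hg : Measurable g) :
    Measurable (f ⋆[ContinuousLinearMap.mul ℂ ℂ, μ] g) :=
  (StronglyMeasurable.integral_prod_right' (f := fun p : G × G => f p.2 * g (p.1 - p.2))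
    (by fun_prop : Measurable _).stronglyMeasurable).measurable

variable [μ.IsAddRightInvariant]

theorem lintegral_lintegral_enorm_mul_sub (hf : Measurable f) (hg : Measurable g) :
    ∫⁻ x, ∫⁻ y, ‖f y * g (x - y)‖ₑ ∂μ ∂μ = eLpNorm f 1 μ * eLpNorm g 1 μ := by
  rw [lintegral_lintegral_swap (by fun_prop)]
  simp_rw [enorm_mul, eLpNorm_one_eq_lintegral_enorm]
  rw [← lintegral_mul_const _ (by fun_prop)]
  refine lintegral_congr fun y => ?_
  rw [lintegral_const_mul _ (by fun_prop), lintegral_sub_right_eq_self (fun x => ‖g x‖ₑ) y]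

theorem eLpNorm_convolution_mul_le (hf : Measurable f) (hg : Measurable g) :
    eLpNorm (f ⋆[mul ℂ ℂ, μ] g) 1 μ ≤ eLpNorm f 1 μ * eLpNorm g 1 μ := by
  rw [← lintegral_lintegral_enorm_mul_sub hf hg, eLpNorm_one_eq_lintegral_enorm]
  exact lintegral_mono fun x => enorm_integral_le_lintegral_enorm _

theorem ae_integrable_convolution_mul_integrand (hf : Measurable f) (hg : Measurable g)
    (hf₁ : eLpNorm f 1 μ ≠ ⊤) (hg₁ : eLpNorm g 1 μ ≠ ⊤) :
    ∀ᵐ x ∂μ, Integrable (fun y => f y * g (x - y)) μ := by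
  have hfin : ∫⁻ x, ∫⁻ y, ‖f y * g (x - y)‖ₑ ∂μ ∂μ ≠ ⊤ := by
    rw [lintegral_lintegral_enorm_mul_sub hf hg]
    exact ENNReal.mul_ne_top hf₁ hg₁
  filter_upwards [ae_lt_top (by fun_prop) hfin] with x hx
  exact ⟨by fun_prop, hx⟩

theorem eLpNorm_convolution_mul_sub_le (hf : Measurable f) (hf' : Measurable f')
    (hg : Measurable g) (hg' : Measurable g') (hf₁ : eLpNorm f 1 μ ≠ ⊤)
    (hf'₁ : eLpNorm f' 1 μ ≠ ⊤) (hg₁ : eLpNorm g 1 μ ≠ ⊤) (hg'₁ : eLpNorm g' 1 μ ≠ ⊤) :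
    eLpNorm (f ⋆[mul ℂ ℂ, μ] g - f' ⋆[mul ℂ ℂ, μ] g') 1 μ
      ≤ eLpNorm (f - f') 1 μ * eLpNorm g 1 μ + eLpNorm f' 1 μ * eLpNorm (g - g') 1 μ := by
  have hsplit : f ⋆[mul ℂ ℂ, μ] g - f' ⋆[mul ℂ ℂ, μ] g'
      =ᵐ[μ] (f - f') ⋆[mul ℂ ℂ, μ] g + f' ⋆[mul ℂ ℂ, μ] (g - g') := by
    filter_upwards [ae_integrable_convolution_mul_integrand hf hg hf₁ hg₁,
      ae_integrable_convolution_mul_integrand hf' hg' hf'₁ hg'₁,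
      ae_integrable_convolution_mul_integrand hf' hg hf'₁ hg₁] with x h h' h''
    simp only [Pi.add_apply, Pi.sub_apply, convolution_mul, sub_mul, mul_sub]
    rw [integral_sub h h'', integral_sub h'' h']
    ring
  rw [eLpNorm_congr_ae hsplit]
  refine (eLpNorm_add_le ?_ ?_ le_rfl).trans (add_le_add ?_ ?_)
  · exact ((hf.sub hf').convolution_mul hg).aestronglyMeasurable
  · exact (hf'.convolution_mul (hg.sub hg')).aestronglyMeasurable
  · exact eLpNorm_convolution_mul_le (hf.sub hf') hg
  · exact eLpNorm_convolution_mul_le hf' (hg.sub hg')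

end Convolution

section ConvolutionPower

variable {d : ℕ} {f g : Euc d → ℂ}

theorem convPow_succ (f : Euc d → ℂ) (n : ℕ) :
    convPow f (n + 1) = convPow f n ⋆[ContinuousLinearMap.mul ℂ ℂ] f :=
  rfl

theorem measurable_convPow (hf : Measurable f) (n : ℕ) : Measurable (convPow f n) := by
  induction n with
  | zero => exact hf
  | succ n ih => exact convPow_succ f n ▸ ih.convolution_mul hf

theorem measurable_uncurry_convPow {X : Type*} [MeasurableSpace X] {u : X → Euc d → ℂ}
    (hu : Measurable (uncurry u)) (n : ℕ) : Measurable (uncurry fun x => convPow (u x) n) := by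
  induction n with
  | zero => exact hu
  | succ n ih =>
    have hint : Measurable fun q : (X × Euc d) × Euc d =>
        convPow (u q.1.1) n q.2 * u q.1.1 (q.1.2 - q.2) :=
      (ih.comp ((measurable_fst.comp measurable_fst).prodMk measurable_snd)).mul
        (hu.comp ((measurable_fst.comp measurable_fst).prodMk
          ((measurable_snd.comp measurable_fst).sub measurable_snd)))
    exact (StronglyMeasurable.integral_prod_right' hint.stronglyMeasurable).measurable

theorem eLpNorm_convPow_le (hf : Measurable f) (n : ℕ) :
    eLpNorm (convPow f n) 1 volume ≤ eLpNorm f 1 volume ^ (n + 1) := by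
  induction n with
  | zero => simp [convPow]
  | succ n ih =>
    calc eLpNorm (convPow f (n + 1)) 1 volume
        ≤ eLpNorm (convPow f n) 1 volume * eLpNorm f 1 volume :=
          eLpNorm_convolution_mul_le (measurable_convPow hf n) hf
      _ ≤ eLpNorm f 1 volume ^ (n + 1) * eLpNorm f 1 volume := by gcongr
      _ = eLpNorm f 1 volume ^ (n + 2) := (pow_succ _ _).symm

theorem eLpNorm_convPow_sub_le (hf : Measurable f) (hg : Measurable g) {B : ℝ≥0∞} (hB : B ≠ ⊤)
    (hfB : eLpNorm f 1 volume ≤ B) (hgB : eLpNorm g 1 volume ≤ B) (n : ℕ) :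
    eLpNorm (convPow f n - convPow g n) 1 volume ≤ (n + 1) * B ^ n * eLpNorm (f - g) 1 volume := by
  have hpow : ∀ {h : Euc d → ℂ} n, Measurable h → eLpNorm h 1 volume ≤ B →
      eLpNorm (convPow h n) 1 volume ≤ B ^ (n + 1) := fun n hh hhB =>
    (eLpNorm_convPow_le hh n).trans (pow_le_pow_left' hhB _)
  have hfin : ∀ {h : Euc d → ℂ} n, Measurable h → eLpNorm h 1 volume ≤ B →
      eLpNorm (convPow h n) 1 volume ≠ ⊤ := fun n hh hhB =>
    ne_top_of_le_ne_top (ENNReal.pow_ne_top hB) (hpow n hh hhB)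
  induction n with
  | zero => simp [convPow]
  | succ n ih =>
    calc eLpNorm (convPow f (n + 1) - convPow g (n + 1)) 1 volume
        ≤ eLpNorm (convPow f n - convPow g n) 1 volume * eLpNorm f 1 volume
          + eLpNorm (convPow g n) 1 volume * eLpNorm (f - g) 1 volume :=
          eLpNorm_convolution_mul_sub_le (measurable_convPow hf n) (measurable_convPow hg n) hf hg
            (hfin n hf hfB) (hfin n hg hgB) (ne_top_of_le_ne_top hB hfB)
            (ne_top_of_le_ne_top hB hgB)
      _ ≤ (n + 1) * B ^ n * eLpNorm (f - g) 1 volume * B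
          + B ^ (n + 1) * eLpNorm (f - g) 1 volume := by
          gcongr
          exact hpow n hg hgB
      _ = (↑(n + 1) + 1) * B ^ (n + 1) * eLpNorm (f - g) 1 volume := by
          push_cast
          ring

theorem convPow_succ_congr_ae (h : f =ᵐ[volume] g) (n : ℕ) :
    convPow f (n + 1) = convPow g (n + 1) := by
  induction n with
  | zero => exact convolution_congr (ContinuousLinearMap.mul ℂ ℂ) h h
  | succ n ih =>
    rw [convPow_succ, ih, convPow_succ _ (n + 1)]
    exact convolution_congr (ContinuousLinearMap.mul ℂ ℂ) EventuallyEq.rfl h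

end ConvolutionPower

section WaveKernel

variable {d : ℕ}

theorem abs_kker_le {t : ℝ} (ht : 0 ≤ t) (ξ : Euc d) : |Kker t ξ| ≤ t := by
  unfold Kker
  split_ifs with hξ
  · exact (abs_of_nonneg ht).le
  · have hξ' : 0 < ‖ξ‖ := norm_pos_iff.2 hξ
    rw [abs_div, abs_of_pos hξ', div_le_iff₀ hξ']
    exact (Real.abs_sin_le_abs).trans (abs_of_nonneg (by positivity)).le

theorem norm_mul_abs_kker_le_one (t : ℝ) (ξ : Euc d) : ‖ξ‖ * |Kker t ξ| ≤ 1 := by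
  unfold Kker
  split_ifs with hξ
  · simp [hξ]
  · have hξ' : 0 < ‖ξ‖ := norm_pos_iff.2 hξ
    rw [abs_div, abs_of_pos hξ', mul_div_cancel₀ _ hξ'.ne']
    exact Real.abs_sin_le_one _

theorem jb_le_one_add_norm (ξ : Euc d) : jb ξ ≤ 1 + ‖ξ‖ := by
  rw [jb, ← Real.sqrt_eq_rpow, Real.sqrt_le_iff]
  constructor <;> nlinarith [norm_nonneg ξ]

theorem jb_mul_abs_kker_le_two {t : ℝ} (ht₀ : 0 ≤ t) (ht₁ : t ≤ 1) (ξ : Euc d) :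
    jb ξ * |Kker t ξ| ≤ 2 := by
  calc jb ξ * |Kker t ξ| ≤ (1 + ‖ξ‖) * |Kker t ξ| := by
        gcongr
        exact jb_le_one_add_norm ξ
    _ = |Kker t ξ| + ‖ξ‖ * |Kker t ξ| := by ring
    _ ≤ 1 + 1 := add_le_add ((abs_kker_le ht₀ ξ).trans ht₁) (norm_mul_abs_kker_le_one t ξ)
    _ = 2 := one_add_one_eq_two

theorem measurable_uncurry_kker : Measurable (uncurry (Kker : ℝ → Euc d → ℝ)) := by
  refine Measurable.ite ((measurableSet_singleton 0).preimage measurable_snd) measurable_fst ?_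
  fun_prop

def freeWave (g₀ g₁ : Euc d → ℂ) (t : ℝ) (ξ : Euc d) : ℂ :=
  (Real.cos (t * ‖ξ‖) : ℂ) * g₀ ξ + (Kker t ξ : ℂ) * g₁ ξ

theorem measurable_uncurry_freeWave {g₀ g₁ : Euc d → ℂ} (hg₀ : Measurable g₀)
    (hg₁ : Measurable g₁) : Measurable (uncurry (freeWave g₀ g₁)) :=
  ((Complex.measurable_ofReal.comp (by fun_prop)).mul (hg₀.comp measurable_snd)).add
    ((Complex.measurable_ofReal.comp measurable_uncurry_kker).mul (hg₁.comp measurable_snd))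

theorem eLpNorm_freeWave_le {g₀ g₁ : Euc d → ℂ} (hg₀ : Measurable g₀) (hg₁ : Measurable g₁)
    {t : ℝ} (ht₀ : 0 ≤ t) (ht₁ : t ≤ 1) :
    eLpNorm (freeWave g₀ g₁ t) 1 volume
      ≤ eLpNorm g₀ 1 volume + 2 * eLpNorm (fun ξ => ((jb ξ : ℂ))⁻¹ * g₁ ξ) 1 volume := by
  have hK : Measurable fun ξ : Euc d => Kker t ξ :=
    measurable_uncurry_kker.comp measurable_prodMk_left
  refine (eLpNorm_add_le (by fun_prop) (by fun_prop) le_rfl).trans (add_le_add ?_ ?_)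
  · refine eLpNorm_mono fun ξ => ?_
    rw [norm_mul, Complex.norm_real, Real.norm_eq_abs]
    exact mul_le_of_le_one_left (norm_nonneg _) (Real.abs_cos_le_one _)
  · refine (eLpNorm_le_mul_eLpNorm_of_ae_le_mul (c := 2) (ae_of_all _ fun ξ => ?_) 1).trans_eq
      (by rw [ENNReal.ofReal_ofNat])
    have hjb : 0 < jb ξ := Real.rpow_pos_of_pos (by positivity) _
    rw [norm_mul, norm_mul, norm_inv, Complex.norm_real, Complex.norm_real, Real.norm_eq_abs,
      Real.norm_eq_abs, abs_of_pos hjb, ← mul_assoc, ← div_eq_mul_inv]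
    gcongr
    rw [le_div_iff₀ hjb, mul_comm]
    exact jb_mul_abs_kker_le_two ht₀ ht₁ ξ

end WaveKernel

section TimeIntegral

variable {α : Type*} [MeasurableSpace α]

theorem measurable_setIntegral_Ioc {F : α → ℝ → ℂ} (hF : Measurable (uncurry F)) {a b : α → ℝ}
    (ha : Measurable a) (hb : Measurable b) :
    Measurable fun x => ∫ s in Ioc (a x) (b x), F x s := by
  have hS : MeasurableSet {p : α × ℝ | p.2 ∈ Ioc (a p.1) (b p.1)} :=
    (measurableSet_lt (ha.comp measurable_fst) measurable_snd).inter
      (measurableSet_le measurable_snd (hb.comp measurable_fst))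
  simp_rw [← integral_indicator measurableSet_Ioc]
  exact (StronglyMeasurable.integral_prod_right'
    (f := fun p : α × ℝ => (Ioc (a p.1) (b p.1)).indicator (F p.1) p.2)
    (hF.indicator hS).stronglyMeasurable).measurable

theorem measurable_intervalIntegral {F : α → ℝ → ℂ} (hF : Measurable (uncurry F)) {a b : α → ℝ}
    (ha : Measurable a) (hb : Measurable b) :
    Measurable fun x => ∫ s in a x..b x, F x s :=
  (measurable_setIntegral_Ioc hF ha hb).sub (measurable_setIntegral_Ioc hF hb ha)

variable {ν : Measure α} [SFinite ν] {F : ℝ → α → ℂ} {a b : ℝ}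

theorem eLpNorm_intervalIntegral_le (hF : Measurable (uncurry F)) (hab : a ≤ b) :
    eLpNorm (fun x => ∫ s in a..b, F s x) 1 ν ≤ ∫⁻ s in Ioc a b, eLpNorm (F s) 1 ν := by
  simp_rw [eLpNorm_one_eq_lintegral_enorm, intervalIntegral.integral_of_le hab]
  rw [lintegral_lintegral_swap hF.enorm.aemeasurable]
  exact lintegral_mono fun x => enorm_integral_le_lintegral_enorm _

theorem ae_intervalIntegrable_of_lintegral_ne_top (hF : Measurable (uncurry F)) (hab : a ≤ b)
    (hfin : ∫⁻ s in Ioc a b, eLpNorm (F s) 1 ν ≠ ⊤) :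
    ∀ᵐ x ∂ν, IntervalIntegrable (fun s => F s x) volume a b := by
  simp_rw [eLpNorm_one_eq_lintegral_enorm] at hfin
  rw [lintegral_lintegral_swap hF.enorm.aemeasurable] at hfin
  filter_upwards [ae_lt_top (Measurable.lintegral_prod_right' (hF.comp measurable_swap).enorm)
    hfin] with x hx
  rw [intervalIntegrable_iff_integrableOn_Ioc_of_le hab]
  exact ⟨(hF.comp (measurable_id.prodMk measurable_const)).aestronglyMeasurable, hx⟩

end TimeIntegral

section JointlyMeasurableRepresentative

theorem exists_pos_dist_floor_grid_lt {X : Type*} [PseudoMetricSpace X] {f : ℝ → X} {a b : ℝ}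
    (hf : ContinuousOn f (Icc a b)) {ε : ℝ} (hε : 0 < ε) :
    ∃ δ > 0, ∀ t ∈ Icc a b, dist (f (a + δ * ⌊(t - a) / δ⌋)) (f t) < ε := by
  obtain ⟨δ, hδ, hfδ⟩ := Metric.uniformContinuousOn_iff.1
    (isCompact_Icc.uniformContinuousOn_of_continuous hf) ε hε
  refine ⟨δ, hδ, fun t ht => ?_⟩
  have hle : δ * ⌊(t - a) / δ⌋ ≤ t - a := by
    have := Int.floor_le ((t - a) / δ)
    rwa [le_div_iff₀ hδ, mul_comm] at this
  have hlt : t - a < δ * ⌊(t - a) / δ⌋ + δ := by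
    have := Int.lt_floor_add_one ((t - a) / δ)
    rwa [div_lt_iff₀ hδ, mul_comm, mul_add_one] at this
  have hnonneg : 0 ≤ δ * ⌊(t - a) / δ⌋ := mul_nonneg hδ.le
    (Int.cast_nonneg (Int.floor_nonneg.2 (div_nonneg (sub_nonneg.2 ht.1) hδ.le)))
  refine hfδ _ ⟨by linarith, by linarith [ht.2]⟩ t ht ?_
  rw [Real.dist_eq, abs_lt]
  constructor <;> linarith

variable {α : Type*} [MeasurableSpace α] {μ : Measure α}

theorem ae_tendsto_of_tsum_eLpNorm_sub_ne_top {f : ℕ → α → ℂ} {g : α → ℂ}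
    (hf : ∀ j, AEMeasurable (f j) μ) (hg : AEMeasurable g μ)
    (hsum : ∑' j, eLpNorm (f j - g) 1 μ ≠ ⊤) :
    ∀ᵐ x ∂μ, Tendsto (fun j => f j x) atTop (𝓝 (g x)) := by
  have hmeas : ∀ j, AEMeasurable (fun x => ‖f j x - g x‖ₑ) μ := fun j => ((hf j).sub hg).enorm
  simp_rw [eLpNorm_one_eq_lintegral_enorm, Pi.sub_apply, ← lintegral_tsum hmeas] at hsum
  filter_upwards [ae_lt_top' (AEMeasurable.tsum hmeas) hsum] with x hx
  rw [tendsto_iff_edist_tendsto_0]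
  simp_rw [edist_eq_enorm_sub]
  exact ENNReal.tendsto_atTop_zero_of_tsum_ne_top hx.ne

variable {v : ℝ → Lp ℂ 1 μ} {a b : ℝ}

theorem exists_measurable_uncurry_eLpNorm_sub_le (hv : ContinuousOn v (Icc a b)) {ε : ℝ}
    (hε : 0 < ε) :
    ∃ g : ℝ → α → ℂ, Measurable (uncurry g) ∧
      ∀ t ∈ Icc a b, eLpNorm (g t - ⇑(v t)) 1 μ ≤ ENNReal.ofReal ε := by
  obtain ⟨δ, -, hδ⟩ := exists_pos_dist_floor_grid_lt hv hε
  refine ⟨fun t => v (a + δ * ⌊(t - a) / δ⌋), ?_, fun t ht => ?_⟩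
  · have hgrid : Measurable fun q : α × ℤ => v (a + δ * q.2) q.1 :=
      measurable_from_prod_countable_left fun z =>
        (Lp.stronglyMeasurable (v (a + δ * z))).measurable
    exact hgrid.comp (measurable_snd.prodMk (Int.measurable_floor.comp (by fun_prop)))
  · rw [← Lp.edist_def]
    exact (edist_le_ofReal hε.le).2 (hδ t ht).le

theorem exists_measurable_uncurry_ae_eq (hv : ContinuousOn v (Icc a b)) :
    ∃ w : ℝ → α → ℂ, Measurable (uncurry w) ∧ ∀ t ∈ Icc a b, w t =ᵐ[μ] v t := by
  choose g hg hgv using fun j : ℕ =>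
    exists_measurable_uncurry_eLpNorm_sub_le hv (pow_pos (one_half_pos (α := ℝ)) j)
  refine ⟨fun t x => limUnder atTop fun j => g j t x,
    (StronglyMeasurable.limUnder (l := atTop) fun j => (hg j).stronglyMeasurable).measurable,
    fun t ht => ?_⟩
  have hsum : ∑' j, eLpNorm (g j t - ⇑(v t)) 1 μ ≠ ⊤ := by
    refine ne_top_of_le_ne_top ?_ (ENNReal.tsum_le_tsum fun j => hgv j t ht)
    rw [← ENNReal.ofReal_tsum_of_nonneg (fun j => by positivity) summable_geometric_two]
    exact ENNReal.ofReal_ne_top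
  filter_upwards [ae_tendsto_of_tsum_eLpNorm_sub_ne_top
    (fun j => ((hg j).comp measurable_prodMk_left).aemeasurable)
    (Lp.aestronglyMeasurable (v t)).aemeasurable hsum] with x hx
  exact hx.limUnder_eq

end JointlyMeasurableRepresentative

section Duhamel

variable {d n : ℕ} {u u' : ℝ → Euc d → ℂ} {t : ℝ} {B : ℝ≥0∞}

/-- Fourier-side Duhamel term of `∂ₜ²u - Δu = u^{n+1}`; as in `convPow`, the index is shifted
by one. -/
def duhamel (n : ℕ) (u : ℝ → Euc d → ℂ) (t : ℝ) (ξ : Euc d) : ℂ :=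
  ∫ s in (0 : ℝ)..t, (Kker (t - s) ξ : ℂ) * convPow (u s) n ξ

theorem measurable_uncurry_duhamel (hu : Measurable (uncurry u)) (n : ℕ) :
    Measurable (uncurry (duhamel n u)) := by
  have hF : Measurable (uncurry fun (p : ℝ × Euc d) s =>
      (Kker (p.1 - s) p.2 : ℂ) * convPow (u s) n p.2) :=
    (Complex.measurable_ofReal.comp (measurable_uncurry_kker.comp
      (((measurable_fst.comp measurable_fst).sub measurable_snd).prodMk
        (measurable_snd.comp measurable_fst)))).mul
      ((measurable_uncurry_convPow hu n).comp (measurable_snd.prodMk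
        (measurable_snd.comp measurable_fst)))
  exact measurable_intervalIntegral hF measurable_const measurable_fst

theorem measurable_uncurry_duhamel_integrand (hu : Measurable (uncurry u)) (t : ℝ) (n : ℕ) :
    Measurable (uncurry fun s ξ => (Kker (t - s) ξ : ℂ) * convPow (u s) n ξ) :=
  (Complex.measurable_ofReal.comp (measurable_uncurry_kker.comp
    ((measurable_const.sub measurable_fst).prodMk measurable_snd))).mul
    (measurable_uncurry_convPow hu n)

theorem eLpNorm_kker_mul_le {t : ℝ} (ht : 0 ≤ t) (h : Euc d → ℂ) :
    eLpNorm (fun ξ => (Kker t ξ : ℂ) * h ξ) 1 volume ≤ ENNReal.ofReal t * eLpNorm h 1 volume :=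
  eLpNorm_le_mul_eLpNorm_of_ae_le_mul (ae_of_all _ fun ξ => by
    rw [norm_mul, Complex.norm_real, Real.norm_eq_abs]
    gcongr
    exact abs_kker_le ht ξ) 1

theorem lintegral_eLpNorm_duhamel_integrand_le (hu : Measurable (uncurry u)) (ht : 0 ≤ t)
    (huB : ∀ s ∈ Ioc 0 t, eLpNorm (u s) 1 volume ≤ B) :
    ∫⁻ s in Ioc 0 t, eLpNorm (fun ξ => (Kker (t - s) ξ : ℂ) * convPow (u s) n ξ) 1 volume
      ≤ ENNReal.ofReal (t * t) * B ^ (n + 1) := by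
  calc ∫⁻ s in Ioc 0 t, eLpNorm (fun ξ => (Kker (t - s) ξ : ℂ) * convPow (u s) n ξ) 1 volume
      ≤ ∫⁻ _ in Ioc 0 t, ENNReal.ofReal t * B ^ (n + 1) := by
        refine setLIntegral_mono' measurableSet_Ioc fun s hs => ?_
        refine (eLpNorm_kker_mul_le (sub_nonneg.2 hs.2) _).trans ?_
        gcongr
        · linarith [hs.1]
        · exact (eLpNorm_convPow_le (hu.comp measurable_prodMk_left) n).trans
            (pow_le_pow_left' (huB s hs) _)
    _ = ENNReal.ofReal (t * t) * B ^ (n + 1) := by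
        rw [setLIntegral_const, Real.volume_Ioc, sub_zero, ENNReal.ofReal_mul ht]
        ring

theorem eLpNorm_duhamel_le (hu : Measurable (uncurry u)) (ht : 0 ≤ t)
    (huB : ∀ s ∈ Ioc 0 t, eLpNorm (u s) 1 volume ≤ B) :
    eLpNorm (duhamel n u t) 1 volume ≤ ENNReal.ofReal (t * t) * B ^ (n + 1) :=
  (eLpNorm_intervalIntegral_le (measurable_uncurry_duhamel_integrand hu t n) ht).trans
    (lintegral_eLpNorm_duhamel_integrand_le hu ht huB)

theorem eLpNorm_duhamel_sub_le (hu : Measurable (uncurry u)) (hu' : Measurable (uncurry u'))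
    (ht : 0 ≤ t) (hB : B ≠ ⊤) (huB : ∀ s ∈ Ioc 0 t, eLpNorm (u s) 1 volume ≤ B)
    (hu'B : ∀ s ∈ Ioc 0 t, eLpNorm (u' s) 1 volume ≤ B) {δ : ℝ≥0∞}
    (hδ : ∀ s ∈ Ioc 0 t, eLpNorm (u s - u' s) 1 volume ≤ δ) :
    eLpNorm (duhamel n u t - duhamel n u' t) 1 volume
      ≤ ENNReal.ofReal (t * t) * ((n + 1) * B ^ n * δ) := by
  have hF := measurable_uncurry_duhamel_integrand hu t n
  have hF' := measurable_uncurry_duhamel_integrand hu' t n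
  have hfin : ENNReal.ofReal (t * t) * B ^ (n + 1) ≠ ⊤ :=
    ENNReal.mul_ne_top ENNReal.ofReal_ne_top (ENNReal.pow_ne_top hB)
  have hsub : duhamel n u t - duhamel n u' t =ᵐ[volume] fun ξ => ∫ s in (0 : ℝ)..t,
      ((Kker (t - s) ξ : ℂ) * convPow (u s) n ξ - (Kker (t - s) ξ : ℂ) * convPow (u' s) n ξ) := by
    filter_upwards [ae_intervalIntegrable_of_lintegral_ne_top hF ht
        (ne_top_of_le_ne_top hfin (lintegral_eLpNorm_duhamel_integrand_le hu ht huB)),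
      ae_intervalIntegrable_of_lintegral_ne_top hF' ht
        (ne_top_of_le_ne_top hfin (lintegral_eLpNorm_duhamel_integrand_le hu' ht hu'B))]
      with ξ h h'
    exact (intervalIntegral.integral_sub h h').symm
  rw [eLpNorm_congr_ae hsub]
  refine (eLpNorm_intervalIntegral_le (hF.sub hF') ht).trans ?_
  calc ∫⁻ s in Ioc 0 t, eLpNorm (fun ξ => (Kker (t - s) ξ : ℂ) * convPow (u s) n ξ
        - (Kker (t - s) ξ : ℂ) * convPow (u' s) n ξ) 1 volume
      ≤ ∫⁻ _ in Ioc 0 t, ENNReal.ofReal t * ((n + 1) * B ^ n * δ) := by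
        refine setLIntegral_mono' measurableSet_Ioc fun s hs => ?_
        simp_rw [← mul_sub]
        refine (eLpNorm_kker_mul_le (sub_nonneg.2 hs.2) _).trans ?_
        gcongr
        · linarith [hs.1]
        · exact (eLpNorm_convPow_sub_le (hu.comp measurable_prodMk_left)
            (hu'.comp measurable_prodMk_left) hB (huB s hs) (hu'B s hs) n).trans
            (by gcongr; exact hδ s hs)
    _ = ENNReal.ofReal (t * t) * ((n + 1) * B ^ n * δ) := by
        rw [setLIntegral_const, Real.volume_Ioc, sub_zero, ENNReal.ofReal_mul ht]
        ring

theorem duhamel_congr_ae (hn : n ≠ 0) (ht : 0 ≤ t) (h : ∀ s ∈ Icc 0 t, u s =ᵐ[volume] u' s) :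
    duhamel n u t = duhamel n u' t := by
  obtain ⟨n, rfl⟩ := Nat.exists_eq_succ_of_ne_zero hn
  funext ξ
  refine intervalIntegral.integral_congr fun s hs => ?_
  rw [uIcc_of_le ht] at hs
  simp only [convPow_succ_congr_ae (h s hs)]

end Duhamel

section Picard

variable {d n : ℕ} {T : ℝ} {P : ℕ → ℝ → Euc d → ℂ}

theorem measurable_uncurry_picard (h0 : Measurable (uncurry (P 0)))
    (hsucc : ∀ m t ξ, P (m + 1) t ξ = P 0 t ξ + duhamel n (P m) t ξ) (m : ℕ) :
    Measurable (uncurry (P m)) := by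
  induction m with
  | zero => exact h0
  | succ m ih =>
    have hP : uncurry (P (m + 1)) = uncurry (P 0) + uncurry (duhamel n (P m)) := by
      ext ⟨t, ξ⟩
      exact hsucc m t ξ
    rw [hP]
    exact h0.add (measurable_uncurry_duhamel ih n)

theorem eLpNorm_picard_le (hP : ∀ m, Measurable (uncurry (P m)))
    (hsucc : ∀ m t ξ, P (m + 1) t ξ = P 0 t ξ + duhamel n (P m) t ξ) {A B : ℝ≥0∞}
    (hA : ∀ t ∈ Icc 0 T, eLpNorm (P 0 t) 1 volume ≤ A)
    (hAB : A + ENNReal.ofReal (T * T) * B ^ (n + 1) ≤ B) (m : ℕ) :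
    ∀ t ∈ Icc 0 T, eLpNorm (P m t) 1 volume ≤ B := by
  induction m with
  | zero => exact fun t ht => (hA t ht).trans (le_self_add.trans hAB)
  | succ m ih =>
    intro t ht
    have hIoc : ∀ s ∈ Ioc 0 t, eLpNorm (P m s) 1 volume ≤ B :=
      fun s hs => ih s ⟨hs.1.le, hs.2.trans ht.2⟩
    calc eLpNorm (P (m + 1) t) 1 volume
        = eLpNorm (P 0 t + duhamel n (P m) t) 1 volume := by
          congr 1
          exact funext (hsucc m t)
      _ ≤ eLpNorm (P 0 t) 1 volume + eLpNorm (duhamel n (P m) t) 1 volume :=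
          eLpNorm_add_le ((hP 0).comp measurable_prodMk_left).aestronglyMeasurable
            ((measurable_uncurry_duhamel (hP m) n).comp measurable_prodMk_left).aestronglyMeasurable
            le_rfl
      _ ≤ A + ENNReal.ofReal (T * T) * B ^ (n + 1) := by
          gcongr
          · exact hA t ht
          · refine (eLpNorm_duhamel_le (hP m) ht.1 hIoc).trans ?_
            gcongr ENNReal.ofReal ?_ * _
            exact mul_self_le_mul_self ht.1 ht.2
      _ ≤ B := hAB

theorem iSup_eLpNorm_picard_sub_le (hP : ∀ m, Measurable (uncurry (P m)))
    (hsucc : ∀ m t ξ, P (m + 1) t ξ = P 0 t ξ + duhamel n (P m) t ξ) {B : ℝ≥0∞} (hB : B ≠ ⊤)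
    (hPB : ∀ m, ∀ t ∈ Icc 0 T, eLpNorm (P m t) 1 volume ≤ B) {w : ℝ → Euc d → ℂ}
    (hw : Measurable (uncurry w)) (hwB : ∀ t ∈ Icc 0 T, eLpNorm (w t) 1 volume ≤ B)
    (hw_eq : ∀ t ∈ Icc 0 T, w t =ᵐ[volume] P 0 t + duhamel n w t) (m : ℕ) :
    ⨆ t ∈ Icc 0 T, eLpNorm (P (m + 1) t - w t) 1 volume
      ≤ ENNReal.ofReal (T * T) * ((n + 1) * B ^ n)
        * ⨆ t ∈ Icc 0 T, eLpNorm (P m t - w t) 1 volume := by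
  refine iSup₂_le fun t ht => ?_
  have hIcc : ∀ s ∈ Ioc 0 t, s ∈ Icc 0 T := fun s hs => ⟨hs.1.le, hs.2.trans ht.2⟩
  have hdiff : P (m + 1) t - w t =ᵐ[volume] duhamel n (P m) t - duhamel n w t := by
    filter_upwards [hw_eq t ht] with ξ hξ
    simp only [Pi.sub_apply, hsucc m t ξ, hξ, Pi.add_apply]
    ring
  rw [eLpNorm_congr_ae hdiff]
  refine (eLpNorm_duhamel_sub_le (hP m) hw ht.1 hB (fun s hs => hPB m s (hIcc s hs))
    (fun s hs => hwB s (hIcc s hs))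
    (fun s hs => le_biSup (fun s => eLpNorm (P m s - w s) 1 volume) (hIcc s hs))).trans ?_
  rw [← mul_assoc]
  gcongr ENNReal.ofReal ?_ * _ * _
  exact mul_self_le_mul_self ht.1 ht.2

end Picard

theorem ENNReal.tendsto_atTop_zero_of_le_mul {D : ℕ → ℝ≥0∞} {q : ℝ≥0∞} (hq : q < 1)
    (h0 : D 0 ≠ ⊤) (hD : ∀ m, D (m + 1) ≤ q * D m) : Tendsto D atTop (𝓝 0) := by
  have hgeom : ∀ m, D m ≤ q ^ m * D 0 := by
    intro m
    induction m with
    | zero => simp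
    | succ m ih =>
      calc D (m + 1) ≤ q * D m := hD m
        _ ≤ q * (q ^ m * D 0) := by gcongr
        _ = q ^ (m + 1) * D 0 := by ring
  have hlim : Tendsto (fun m => q ^ m * D 0) atTop (𝓝 0) := by
    simpa using ENNReal.Tendsto.mul_const (ENNReal.tendsto_pow_atTop_nhds_zero_of_lt_one hq)
      (Or.inr h0)
  exact tendsto_of_tendsto_of_tendsto_of_le_of_le tendsto_const_nhds hlim (fun _ => zero_le)
    hgeom

theorem tendsto_iSup_eLpNorm_picard_sub {d n : ℕ} {T : ℝ} {P : ℕ → ℝ → Euc d → ℂ}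
    (hP0 : Measurable (uncurry (P 0)))
    (hsucc : ∀ m t ξ, P (m + 1) t ξ = P 0 t ξ + duhamel n (P m) t ξ) {A B : ℝ≥0∞}
    (hA : ∀ t ∈ Icc 0 T, eLpNorm (P 0 t) 1 volume ≤ A)
    (hAB : A + ENNReal.ofReal (T * T) * B ^ (n + 1) ≤ B) (hB : B ≠ ⊤)
    (hq : ENNReal.ofReal (T * T) * ((n + 1) * B ^ n) < 1) {w : ℝ → Euc d → ℂ}
    (hw : Measurable (uncurry w)) (hwB : ∀ t ∈ Icc 0 T, eLpNorm (w t) 1 volume ≤ B)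
    (hw_eq : ∀ t ∈ Icc 0 T, w t =ᵐ[volume] P 0 t + duhamel n w t) :
    Tendsto (fun m => ⨆ t ∈ Icc 0 T, eLpNorm (P m t - w t) 1 volume) atTop (𝓝 0) := by
  have hP := measurable_uncurry_picard hP0 hsucc
  have hPB := eLpNorm_picard_le hP hsucc hA hAB
  refine ENNReal.tendsto_atTop_zero_of_le_mul hq (ne_top_of_le_ne_top
    (ENNReal.add_ne_top.2 ⟨hB, hB⟩) (iSup₂_le fun t ht => ?_))
    (iSup_eLpNorm_picard_sub_le hP hsucc hB hPB hw hwB hw_eq)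
  exact (eLpNorm_sub_le ((hP 0).comp measurable_prodMk_left).aestronglyMeasurable
    (hw.comp measurable_prodMk_left).aestronglyMeasurable le_rfl).trans
    (add_le_add (hPB 0 t ht) (hwB t ht))

theorem mul_self_mul_pow_le_of_le_mul_rpow {M T c a : ℝ} (hM : 0 < M) (hT : 0 ≤ T)
    (hTc : T ≤ c * M ^ (-a / 2)) : T * T * M ^ a ≤ c * c := by
  have hsq : (c * M ^ (-a / 2)) * (c * M ^ (-a / 2)) * M ^ a = c * c := by
    rw [show (c * M ^ (-a / 2)) * (c * M ^ (-a / 2)) * M ^ a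
        = c * c * (M ^ (-a / 2) * M ^ (-a / 2) * M ^ a) by ring,
      ← Real.rpow_add hM, ← Real.rpow_add hM]
    norm_num
  rw [← hsq]
  gcongr ?_ * _
  exact mul_self_le_mul_self hT hTc

theorem picard_smallness_of_le_rpow {n : ℕ} {M T : ℝ} (hM : 0 < M) (hT : 0 ≤ T)
    (hTc : T ≤ (((n : ℝ) + 1) * 2 ^ (n + 1))⁻¹ * M ^ (-(n : ℝ) / 2)) :
    ENNReal.ofReal M + ENNReal.ofReal (T * T) * ENNReal.ofReal (2 * M) ^ (n + 1)
        ≤ ENNReal.ofReal (2 * M) ∧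
      ENNReal.ofReal (T * T) * ((n + 1) * ENNReal.ofReal (2 * M) ^ n) < 1 := by
  set c : ℝ := (((n : ℝ) + 1) * 2 ^ (n + 1))⁻¹
  have hc₀ : 0 ≤ c := by positivity
  have hc₁ : c ≤ 1 := inv_le_one_of_one_le₀ (one_le_mul_of_one_le_of_one_le
    (le_add_of_nonneg_left n.cast_nonneg) (one_le_pow₀ one_le_two))
  have hTM : T * T * M ^ n ≤ c := by
    have := mul_self_mul_pow_le_of_le_mul_rpow hM hT hTc
    rw [Real.rpow_natCast] at this
    exact this.trans (mul_le_of_le_one_left hc₀ hc₁)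
  have hsmall : T * T * (2 * M) ^ n * (2 * (n + 1)) ≤ 1 := by
    calc T * T * (2 * M) ^ n * (2 * (n + 1)) = T * T * M ^ n * ((n + 1) * 2 ^ (n + 1)) := by
          ring
      _ ≤ c * ((n + 1) * 2 ^ (n + 1)) := by gcongr
      _ = 1 := inv_mul_cancel₀ (by positivity)
  have hcast : ((n : ℝ≥0∞) + 1) = ENNReal.ofReal (n + 1) := by
    rw [ENNReal.ofReal_add n.cast_nonneg zero_le_one, ENNReal.ofReal_natCast, ENNReal.ofReal_one]
  rw [← ENNReal.ofReal_pow (by positivity), ← ENNReal.ofReal_pow (by positivity), hcast,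
    ← ENNReal.ofReal_mul (by positivity), ← ENNReal.ofReal_mul (by positivity),
    ← ENNReal.ofReal_mul (by positivity)]
  constructor
  · have hX : T * T * (2 * M) ^ (n + 1) ≤ M := by
      refine le_of_mul_le_mul_right ?_ (by positivity : (0 : ℝ) < n + 1)
      calc T * T * (2 * M) ^ (n + 1) * (n + 1) = T * T * (2 * M) ^ n * (2 * (n + 1)) * M := by
            ring
        _ ≤ 1 * M := by gcongr
        _ ≤ M * (n + 1) := by nlinarith [n.cast_nonneg (α := ℝ)]
    calc ENNReal.ofReal M + ENNReal.ofReal (T * T * (2 * M) ^ (n + 1))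
        ≤ ENNReal.ofReal M + ENNReal.ofReal M := by gcongr
      _ = ENNReal.ofReal (2 * M) := by rw [← ENNReal.ofReal_add hM.le hM.le, two_mul]
  · rw [ENNReal.ofReal_lt_one]
    linarith [show T * T * ((n + 1) * (2 * M) ^ n) = T * T * (2 * M) ^ n * (2 * (n + 1)) / 2 by
      ring]

theorem picard_iterates_converge_general (d k : ℕ) (hk : 2 ≤ k) :
    ∃ c : ℝ, 0 < c ∧
      ∀ (g₀ g₁ : Euc d → ℂ), Measurable g₀ → Measurable g₁ →
        Integrable g₀ → Integrable (fun ξ => ((jb ξ : ℂ))⁻¹ * g₁ ξ) →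
        ∀ M : ℝ, 0 < M →
        eLpNorm g₀ 1 volume + 2 * eLpNorm (fun ξ => ((jb ξ : ℂ))⁻¹ * g₁ ξ) 1 volume
          ≤ ENNReal.ofReal M →
        ∀ T : ℝ, 0 < T → T ≤ min (c * M ^ (-((k : ℝ) - 1) / 2)) 1 →
        ∀ v : ℝ → Lp ℂ 1 (volume : Measure (Euc d)),
          ContinuousOn v (Set.Icc 0 T) →
          (∀ t ∈ Set.Icc (0 : ℝ) T, eLpNorm (fun ξ => v t ξ) 1 volume ≤ ENNReal.ofReal (2 * M)) →
          (∀ t ∈ Set.Icc (0 : ℝ) T, ∀ᵐ ξ : Euc d,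
            v t ξ = (Real.cos (t * ‖ξ‖) : ℂ) * g₀ ξ + (Kker t ξ : ℂ) * g₁ ξ
              + ∫ t' in (0 : ℝ)..t,
                  (Kker (t - t') ξ : ℂ) * convPow (fun x => v t' x) (k - 1) ξ) →
        ∀ P : ℕ → ℝ → Euc d → ℂ,
          (∀ t ξ, P 0 t ξ = (Real.cos (t * ‖ξ‖) : ℂ) * g₀ ξ + (Kker t ξ : ℂ) * g₁ ξ) →
          (∀ m t ξ, P (m + 1) t ξ = P 0 t ξ
            + ∫ t' in (0 : ℝ)..t, (Kker (t - t') ξ : ℂ) * convPow (P m t') (k - 1) ξ) →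
          Filter.Tendsto
            (fun m => ⨆ t ∈ Set.Icc (0 : ℝ) T,
              eLpNorm (fun ξ => P m t ξ - v t ξ) 1 volume)
            Filter.atTop (nhds 0) := by
  obtain ⟨n, rfl, hn⟩ : ∃ n, k = n + 1 ∧ n ≠ 0 := ⟨k - 1, by omega, by omega⟩
  refine ⟨(((n : ℝ) + 1) * 2 ^ (n + 1))⁻¹, by positivity, ?_⟩
  intro g₀ g₁ hg₀ hg₁ _ _ M hM hMg T hT hTc v hv hvM hveq P hP0 hPsucc
  simp only [Nat.add_sub_cancel] at hveq hPsucc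
  have hP0' : P 0 = freeWave g₀ g₁ := funext₂ hP0
  obtain ⟨hAB, hq⟩ :=
    picard_smallness_of_le_rpow hM hT.le (by simpa using hTc.trans (min_le_left _ _))
  have hA : ∀ t ∈ Icc 0 T, eLpNorm (P 0 t) 1 volume ≤ ENNReal.ofReal M := fun t ht => hP0' ▸
    (eLpNorm_freeWave_le hg₀ hg₁ ht.1 (ht.2.trans (hTc.trans (min_le_right _ _)))).trans hMg
  obtain ⟨w, hw, hwv⟩ := exists_measurable_uncurry_ae_eq hv
  have hwB : ∀ t ∈ Icc 0 T, eLpNorm (w t) 1 volume ≤ ENNReal.ofReal (2 * M) := fun t ht =>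
    (eLpNorm_congr_ae (hwv t ht)).trans_le (hvM t ht)
  have hw_eq : ∀ t ∈ Icc 0 T, w t =ᵐ[volume] P 0 t + duhamel n w t := by
    intro t ht
    have hvw : duhamel n (fun s => v s) t = duhamel n w t :=
      duhamel_congr_ae hn ht.1 fun s hs => (hwv s ⟨hs.1, hs.2.trans ht.2⟩).symm
    filter_upwards [hwv t ht, hveq t ht] with ξ hwξ hvξ
    rw [Pi.add_apply, ← hvw, hwξ, hvξ, hP0 t ξ]
    rfl
  refine (tendsto_iSup_eLpNorm_picard_sub (hP0' ▸ measurable_uncurry_freeWave hg₀ hg₁) hPsucc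
    hA hAB ENNReal.ofReal_ne_top hq hw hwB hw_eq).congr fun m => biSup_congr fun t ht => ?_
  exact eLpNorm_congr_ae ((hwv t ht).mono fun ξ hξ => by simp only [Pi.sub_apply, hξ])

/-- convergence of the Picard iterates to the `FL¹` solution of NLW
on the local existence time interval. -/
theorem picard_iterates_converge (d k : ℕ) (hd : 1 ≤ d) (hk : 2 ≤ k) :
    ∃ c : ℝ, 0 < c ∧
      ∀ (g₀ g₁ : Euc d → ℂ), Measurable g₀ → Measurable g₁ →
        Integrable g₀ → Integrable (fun ξ => ((jb ξ : ℂ))⁻¹ * g₁ ξ) →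
        ∀ M : ℝ, 0 < M →
        eLpNorm g₀ 1 volume + 2 * eLpNorm (fun ξ => ((jb ξ : ℂ))⁻¹ * g₁ ξ) 1 volume
          ≤ ENNReal.ofReal M →
        ∀ T : ℝ, 0 < T → T ≤ min (c * M ^ (-((k : ℝ) - 1) / 2)) 1 →
        ∀ v : ℝ → Lp ℂ 1 (volume : Measure (Euc d)),
          ContinuousOn v (Set.Icc 0 T) →
          (∀ t ∈ Set.Icc (0 : ℝ) T, eLpNorm (fun ξ => v t ξ) 1 volume ≤ ENNReal.ofReal (2 * M)) →
          (∀ t ∈ Set.Icc (0 : ℝ) T, ∀ᵐ ξ : Euc d,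
            v t ξ = (Real.cos (t * ‖ξ‖) : ℂ) * g₀ ξ + (Kker t ξ : ℂ) * g₁ ξ
              + ∫ t' in (0 : ℝ)..t,
                  (Kker (t - t') ξ : ℂ) * convPow (fun x => v t' x) (k - 1) ξ) →
        ∀ P : ℕ → ℝ → Euc d → ℂ,
          (∀ t ξ, P 0 t ξ = (Real.cos (t * ‖ξ‖) : ℂ) * g₀ ξ + (Kker t ξ : ℂ) * g₁ ξ) →
          (∀ m t ξ, P (m + 1) t ξ = P 0 t ξ
            + ∫ t' in (0 : ℝ)..t, (Kker (t - t') ξ : ℂ) * convPow (P m t') (k - 1) ξ) →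
          Filter.Tendsto
            (fun m => ⨆ t ∈ Set.Icc (0 : ℝ) T,
              eLpNorm (fun ξ => P m t ξ - v t ξ) 1 volume)
            Filter.atTop (nhds 0) :=
  picard_iterates_converge_general d k hk
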